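/- Let Λ = Λ₁ × Λ₂ be an orthogonal product of two rank-2 lattices in ℝ⁴ = ℝ² ⊕ ℝ². Then Λ has three linearly independent minimal vectors if and only if syst(Λ₁) = syst(Λ₂) and at least one of Λ₁, Λ₂ is well-rounded (i.e. its minimal vectors span ℝ²). -/

import Mathlib

/-! Every minimal vector of `Λ₁ × Λ₂` lies in one of the two factors: if both components of
`(x, y)` are nonzero, its squared norm is at least `2 m²` with `m = min (syst Λ₁) (syst Λ₂)`,
while `m` itself is attained on a factor. So the minimal vectors of the product are those of each
`Λᵢ` with `syst Λᵢ = m`, and the dimension of their span is the sum of the corresponding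
`rᵢ = dim span (minimal vectors of Λᵢ) ∈ {1, 2}`. This sum is at least `3` exactly when both
factors contribute and one of them has `rᵢ = 2`, i.e. is well-rounded. -/

open Complex

/-- The lattice in ℂ ≅ ℝ² generated by `a` and `b`. -/
noncomputable def latticeOf (a b : ℂ) : AddSubgroup ℂ := AddSubgroup.closure {a, b}

/-- The covolume of the lattice generated by `a` and `b`:
the area of the fundamental parallelogram. -/
noncomputable def covol (a b : ℂ) : ℝ := |((starRingEnd ℂ) a * b).im|

/-- The systole of a lattice in ℂ: the infimum of the norms of its
nonzero elements. -/
noncomputable def systole (L : AddSubgroup ℂ) : ℝ :=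
  sInf {r | ∃ v ∈ L, v ≠ 0 ∧ ‖v‖ = r}

/-- A minimal vector of a lattice: a nonzero vector realizing the systole. -/
def IsMinimalVector (L : AddSubgroup ℂ) (v : ℂ) : Prop :=
  v ∈ L ∧ v ≠ 0 ∧ ‖v‖ = systole L

/-- The scaling factor (2/√3)^{1/2} making the hexagonal lattice have
covolume one. -/
noncomputable def c₀ : ℝ := Real.sqrt (2 / Real.sqrt 3)

/-- The hexagonal lattice `ℤ + ℤ e^{iπ/3}` rescaled to covolume one. -/
noncomputable def hexLattice : AddSubgroup ℂ :=
  latticeOf c₀ (c₀ * Complex.exp (Real.pi / 3 * Complex.I))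

/-- A lattice in ℂ ≅ ℝ² is hexagonal if it is the image of the rescaled
hexagonal lattice under a (linear) isometry of ℝ². -/
def IsHexagonal (L : AddSubgroup ℂ) : Prop :=
  ∃ f : ℂ ≃ₗᵢ[ℝ] ℂ, (L : Set ℂ) = f '' (hexLattice : Set ℂ)

/-- The Euclidean norm on ℝ⁴ = ℝ² ⊕ ℝ² ≅ ℂ × ℂ (orthogonal direct sum). -/
noncomputable def norm4 (v : ℂ × ℂ) : ℝ := Real.sqrt (‖v.1‖ ^ 2 + ‖v.2‖ ^ 2)

/-- The systole of a lattice in ℝ⁴ ≅ ℂ × ℂ. -/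
noncomputable def systole4 (L : AddSubgroup (ℂ × ℂ)) : ℝ :=
  sInf {r | ∃ v ∈ L, v ≠ 0 ∧ norm4 v = r}

/-- A minimal vector of a lattice in ℝ⁴ ≅ ℂ × ℂ. -/
def IsMinimalVector4 (L : AddSubgroup (ℂ × ℂ)) (v : ℂ × ℂ) : Prop :=
  v ∈ L ∧ v ≠ 0 ∧ norm4 v = systole4 L

/-- A lattice in ℝ² ≅ ℂ is well-rounded if its minimal vectors span ℝ². -/
def WellRounded (L : AddSubgroup ℂ) : Prop :=
  Submodule.span ℝ {v | IsMinimalVector L v} = ⊤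

open Module Submodule

section LinearAlgebra

variable {K V : Type*} [DivisionRing K] [AddCommGroup V] [Module K V]

theorem Submodule.finrank_prod {W : Type*} [AddCommGroup W] [Module K W] (p : Submodule K V)
    (q : Submodule K W) [FiniteDimensional K p] [FiniteDimensional K q] :
    finrank K (p.prod q) = finrank K p + finrank K q := by
  let e : p.prod q ≃ₗ[K] p × q :=
    { toFun := fun x => (⟨x.1.1, x.2.1⟩, ⟨x.1.2, x.2.2⟩)
      invFun := fun y => ⟨(y.1, y.2), y.1.2, y.2.2⟩
      map_add' := fun _ _ => rfl
      map_smul' := fun _ _ => rfl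
      left_inv := fun _ => rfl
      right_inv := fun _ => rfl }
  rw [e.finrank_eq, Module.finrank_prod]

variable [FiniteDimensional K V]

theorem le_finrank_span_iff_exists_linearIndependent (S : Set V) (n : ℕ) :
    n ≤ finrank K (span K S) ↔ ∃ f : Fin n → V, (∀ i, f i ∈ S) ∧ LinearIndependent K f := by
  refine ⟨fun hn => ?_, fun ⟨f, hfS, hf⟩ => ?_⟩
  · obtain ⟨t, htS, hspan, ht⟩ := exists_linearIndependent K S
    have : Fintype t := (LinearIndependent.setFinite ht).fintype
    rw [← hspan, finrank_span_set_eq_card ht] at hn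
    obtain ⟨u, hut, hu⟩ := Finset.exists_subset_card_eq hn
    have hu_li : LinearIndependent K ((↑) : u → V) :=
      (show LinearIndepOn K id t from ht).mono (by simpa using hut)
    refine ⟨fun i => (u.equivFinOfCardEq hu).symm i, fun i => htS ?_,
      (linearIndependent_equiv _).mpr hu_li⟩
    simpa using hut ((u.equivFinOfCardEq hu).symm i).2
  · calc n = finrank K (span K (Set.range f)) := by rw [finrank_span_eq_card hf, Fintype.card_fin]
      _ ≤ finrank K (span K S) := Submodule.finrank_mono (span_mono (Set.range_subset_iff.mpr hfS))

theorem three_le_finrank_span_iff_exists_linearIndependent (S : Set V) :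
    3 ≤ finrank K (span K S) ↔
      ∃ v₁ v₂ v₃, v₁ ∈ S ∧ v₂ ∈ S ∧ v₃ ∈ S ∧ LinearIndependent K ![v₁, v₂, v₃] := by
  rw [le_finrank_span_iff_exists_linearIndependent]
  simp [Fin.exists_fin_succ_pi, Fin.forall_fin_succ, and_assoc]

end LinearAlgebra

theorem linearIndependent_pair_of_im_conj_mul_ne_zero {a b : ℂ}
    (h : ((starRingEnd ℂ) a * b).im ≠ 0) : LinearIndependent ℝ ![a, b] := by
  simp only [mul_im, conj_re, conj_im, neg_mul] at h
  rw [LinearIndependent.pair_iff]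
  intro s t hst
  have hre := congrArg re hst
  have him := congrArg im hst
  simp only [add_re, add_im, real_smul, mul_re, mul_im, ofReal_re, ofReal_im, zero_mul, sub_zero,
    add_zero, zero_re, zero_im] at hre him
  constructor
  · apply (mul_left_inj' h).mp
    linear_combination b.im * hre - b.re * him
  · apply (mul_left_inj' h).mp
    linear_combination a.re * him - a.im * hre

section Lattice

variable {L : AddSubgroup ℂ} {v : ℂ}

theorem systole_le_norm (hv : v ∈ L) (h0 : v ≠ 0) : systole L ≤ ‖v‖ :=
  csInf_le ⟨0, by rintro _ ⟨w, -, -, rfl⟩; exact norm_nonneg w⟩ ⟨v, hv, h0, rfl⟩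

theorem exists_isMinimalVector [DiscreteTopology L] (hv : v ∈ L) (h0 : v ≠ 0) :
    ∃ u, IsMinimalVector L u := by
  have hfin : (Metric.closedBall 0 ‖v‖ ∩ ((L : Set ℂ) \ {0})).Finite :=
    (Metric.finite_isBounded_inter_isClosed (isDiscrete_iff_discreteTopology.mpr ‹_›)
      Metric.isBounded_closedBall L.isClosed_of_discrete).subset
      (Set.inter_subset_inter_right _ Set.sdiff_subset)
  obtain ⟨u, ⟨hu_ball, hu, hu0⟩, hmin⟩ :=
    Set.exists_min_image _ norm hfin ⟨v, mem_closedBall_zero_iff.mpr le_rfl, hv, h0⟩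
  refine ⟨u, hu, hu0, le_antisymm (le_csInf ⟨_, u, hu, hu0, rfl⟩ ?_) (systole_le_norm hu hu0)⟩
  rintro _ ⟨w, hw, hw0, rfl⟩
  by_cases hwv : ‖w‖ ≤ ‖v‖
  · exact hmin w ⟨mem_closedBall_zero_iff.mpr hwv, hw, hw0⟩
  · exact (mem_closedBall_zero_iff.mp hu_ball).trans (le_of_not_ge hwv)

theorem wellRounded_iff_finrank_span_eq_two :
    WellRounded L ↔ finrank ℝ (span ℝ {v | IsMinimalVector L v}) = 2 := by
  rw [← Complex.finrank_real_complex]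
  exact ⟨fun h => by rw [h, finrank_top], eq_top_of_finrank_eq⟩

theorem finrank_span_minimalVectors_mem_Icc (hv : IsMinimalVector L v) :
    finrank ℝ (span ℝ {v | IsMinimalVector L v}) ∈ Set.Icc 1 2 := by
  refine ⟨Nat.one_le_iff_ne_zero.mpr fun h => hv.2.1 ?_, ?_⟩
  · exact span_eq_bot.mp (Submodule.finrank_eq_zero.mp h) v hv
  · exact Complex.finrank_real_complex ▸ Submodule.finrank_le _

end Lattice

theorem discreteTopology_latticeOf {a b : ℂ} (h : ((starRingEnd ℂ) a * b).im ≠ 0) :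
    DiscreteTopology (latticeOf a b) := by
  have hab := linearIndependent_pair_of_im_conj_mul_ne_zero h
  let B := basisOfLinearIndependentOfCardEqFinrank hab (by simp)
  have hB : latticeOf a b = (span ℤ (Set.range B)).toAddSubgroup := by
    rw [coe_basisOfLinearIndependentOfCardEqFinrank, span_int_eq_addSubgroupClosure,
      Matrix.range_cons, Matrix.range_cons, Matrix.range_empty, Set.union_empty,
      Set.singleton_union]
    rfl
  rw [hB]
  infer_instance

theorem exists_isMinimalVector_latticeOf {a b : ℂ} (h : ((starRingEnd ℂ) a * b).im ≠ 0) :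
    ∃ u, IsMinimalVector (latticeOf a b) u := by
  have := discreteTopology_latticeOf h
  exact exists_isMinimalVector (v := a) (AddSubgroup.subset_closure (by simp))
    (by rintro rfl; simp at h)

@[simp] theorem norm4_mk_zero (x : ℂ) : norm4 (x, 0) = ‖x‖ := by simp [norm4]

@[simp] theorem norm4_zero_mk (y : ℂ) : norm4 (0, y) = ‖y‖ := by simp [norm4]

theorem norm_fst_le_norm4 (v : ℂ × ℂ) : ‖v.1‖ ≤ norm4 v :=
  Real.le_sqrt_of_sq_le (le_add_of_nonneg_right (sq_nonneg _))

theorem norm_snd_le_norm4 (v : ℂ × ℂ) : ‖v.2‖ ≤ norm4 v :=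
  Real.le_sqrt_of_sq_le (le_add_of_nonneg_left (sq_nonneg _))

section Product

variable {L₁ L₂ : AddSubgroup ℂ} {u w : ℂ}

theorem systole4_prod (hu : IsMinimalVector L₁ u) (hw : IsMinimalVector L₂ w) :
    systole4 (L₁.prod L₂) = min (systole L₁) (systole L₂) := by
  set N := {r | ∃ v ∈ L₁.prod L₂, v ≠ 0 ∧ norm4 v = r}
  have h₁ : systole L₁ ∈ N := ⟨(u, 0), ⟨hu.1, zero_mem _⟩, by simp [hu.2.1], by simp [hu.2.2]⟩
  have h₂ : systole L₂ ∈ N := ⟨(0, w), ⟨zero_mem _, hw.1⟩, by simp [hw.2.1], by simp [hw.2.2]⟩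
  have hbdd : BddBelow N := ⟨0, by rintro _ ⟨v, -, -, rfl⟩; exact Real.sqrt_nonneg _⟩
  refine le_antisymm ?_ (le_csInf ⟨_, h₁⟩ ?_)
  · rcases min_choice (systole L₁) (systole L₂) with h | h <;> rw [h]
    exacts [csInf_le hbdd h₁, csInf_le hbdd h₂]
  · rintro _ ⟨⟨x, y⟩, ⟨hx, hy⟩, hxy, rfl⟩
    by_cases hx0 : x = 0
    · have hy0 : y ≠ 0 := by rintro rfl; exact hxy (by rw [hx0]; rfl)
      exact (min_le_right _ _).trans ((systole_le_norm hy hy0).trans (norm_snd_le_norm4 (x, y)))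
    · exact (min_le_left _ _).trans ((systole_le_norm hx hx0).trans (norm_fst_le_norm4 (x, y)))

theorem min_systole_lt_norm4 (hu : IsMinimalVector L₁ u) (hw : IsMinimalVector L₂ w)
    {x y : ℂ} (hx : x ∈ L₁) (hy : y ∈ L₂) (hx0 : x ≠ 0) (hy0 : y ≠ 0) :
    min (systole L₁) (systole L₂) < norm4 (x, y) := by
  have hm : 0 < min (systole L₁) (systole L₂) := by
    rw [lt_min_iff, ← hu.2.2, ← hw.2.2]
    exact ⟨norm_pos_iff.mpr hu.2.1, norm_pos_iff.mpr hw.2.1⟩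
  have hmx := (min_le_left _ (systole L₂)).trans (systole_le_norm hx hx0)
  have hmy := (min_le_right (systole L₁) _).trans (systole_le_norm hy hy0)
  exact Real.lt_sqrt_of_sq_lt (by nlinarith)

theorem isMinimalVector4_prod_iff (hu : IsMinimalVector L₁ u) (hw : IsMinimalVector L₂ w)
    {v : ℂ × ℂ} :
    IsMinimalVector4 (L₁.prod L₂) v ↔
      (v.2 = 0 ∧ IsMinimalVector L₁ v.1 ∧ systole L₁ ≤ systole L₂) ∨
        (v.1 = 0 ∧ IsMinimalVector L₂ v.2 ∧ systole L₂ ≤ systole L₁) := by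
  obtain ⟨x, y⟩ := v
  simp only [IsMinimalVector4, IsMinimalVector, systole4_prod hu hw, AddSubgroup.mem_prod]
  constructor
  · rintro ⟨⟨hx, hy⟩, hxy, hnorm⟩
    by_cases hy0 : y = 0
    · subst hy0
      have hx0 : x ≠ 0 := by rintro rfl; exact hxy rfl
      simp only [norm4_mk_zero] at hnorm
      have := systole_le_norm hx hx0
      refine Or.inl ⟨rfl, ⟨hx, hx0, ?_⟩, ?_⟩ <;> grind
    by_cases hx0 : x = 0
    · subst hx0
      simp only [norm4_zero_mk] at hnorm
      have := systole_le_norm hy hy0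
      refine Or.inr ⟨rfl, ⟨hy, hy0, ?_⟩, ?_⟩ <;> grind
    exact absurd hnorm (min_systole_lt_norm4 hu hw hx hy hx0 hy0).ne'
  · rintro (⟨rfl, ⟨hx, hx0, hnorm⟩, hle⟩ | ⟨rfl, ⟨hy, hy0, hnorm⟩, hle⟩)
    · exact ⟨⟨hx, zero_mem _⟩, by simp [hx0], by simp [hnorm, hle]⟩
    · exact ⟨⟨zero_mem _, hy⟩, by simp [hy0], by simp [hnorm, hle]⟩

theorem minimalVectors4_prod (hu : IsMinimalVector L₁ u) (hw : IsMinimalVector L₂ w) :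
    {v | IsMinimalVector4 (L₁.prod L₂) v} =
      LinearMap.inl ℝ ℂ ℂ '' {x | IsMinimalVector L₁ x ∧ systole L₁ ≤ systole L₂} ∪
        LinearMap.inr ℝ ℂ ℂ '' {y | IsMinimalVector L₂ y ∧ systole L₂ ≤ systole L₁} := by
  ext ⟨x, y⟩
  simp only [Set.mem_ofPred_eq, isMinimalVector4_prod_iff hu hw, Set.mem_union, Set.mem_image,
    LinearMap.inl_apply, LinearMap.inr_apply, Prod.mk.injEq]
  grind

theorem finrank_span_minimalVectors4_prod (hu : IsMinimalVector L₁ u)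
    (hw : IsMinimalVector L₂ w) :
    finrank ℝ (span ℝ {v | IsMinimalVector4 (L₁.prod L₂) v}) =
      (if systole L₁ ≤ systole L₂ then finrank ℝ (span ℝ {x | IsMinimalVector L₁ x}) else 0) +
        (if systole L₂ ≤ systole L₁ then finrank ℝ (span ℝ {y | IsMinimalVector L₂ y}) else 0) := by
  -- `simp` cannot rewrite the set in place, since the type `↥(span ℝ _)` depends on it.
  have hsep (P : ℂ → Prop) (c : Prop) [Decidable c] :
      finrank ℝ (span ℝ {x | P x ∧ c}) = if c then finrank ℝ (span ℝ {x | P x}) else 0 := by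
    split_ifs with hc
    · rw [show {x | P x ∧ c} = {x | P x} by simp [hc]]
    · rw [show {x | P x ∧ c} = ∅ by simp [hc], span_empty, finrank_bot]
  rw [minimalVectors4_prod hu hw, LinearMap.span_inl_union_inr, Submodule.finrank_prod,
    hsep, hsep]

end Product

/-- An orthogonal product Λ₁ × Λ₂ of two rank-2 lattices in ℝ⁴ = ℝ² ⊕ ℝ² has
three linearly independent minimal vectors if and only if
syst(Λ₁) = syst(Λ₂) and at least one of Λ₁, Λ₂ is well-rounded. -/
theorem three_independent_minimal_vectors_iff (a b c d : ℂ)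
    (h₁ : ((starRingEnd ℂ) a * b).im ≠ 0) (h₂ : ((starRingEnd ℂ) c * d).im ≠ 0) :
    (∃ v₁ v₂ v₃ : ℂ × ℂ,
        IsMinimalVector4 ((latticeOf a b).prod (latticeOf c d)) v₁ ∧
        IsMinimalVector4 ((latticeOf a b).prod (latticeOf c d)) v₂ ∧
        IsMinimalVector4 ((latticeOf a b).prod (latticeOf c d)) v₃ ∧
        LinearIndependent ℝ ![v₁, v₂, v₃]) ↔
      systole (latticeOf a b) = systole (latticeOf c d) ∧
        (WellRounded (latticeOf a b) ∨ WellRounded (latticeOf c d)) := by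
  obtain ⟨u, hu⟩ := exists_isMinimalVector_latticeOf h₁
  obtain ⟨w, hw⟩ := exists_isMinimalVector_latticeOf h₂
  refine (three_le_finrank_span_iff_exists_linearIndependent
    {v | IsMinimalVector4 _ v}).symm.trans ?_
  rw [finrank_span_minimalVectors4_prod hu hw, wellRounded_iff_finrank_span_eq_two,
    wellRounded_iff_finrank_span_eq_two]
  obtain ⟨hr₁, hr₁'⟩ := finrank_span_minimalVectors_mem_Icc hu
  obtain ⟨hr₂, hr₂'⟩ := finrank_span_minimalVectors_mem_Icc hw
  rcases lt_trichotomy (systole (latticeOf a b)) (systole (latticeOf c d)) with h | h | h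
  · simp only [h.le, h.not_ge, h.ne, if_true, if_false, false_and, iff_false]
    omega
  · simp only [h, le_refl, if_true, true_and]
    omega
  · simp only [h.le, h.not_ge, h.ne', if_true, if_false, false_and, iff_false]
    omega
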